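/- arXiv:2305.08607 — 5 statements merged into one kernel-verified Lean document; each statement's English description precedes it below -/
import Mathlib

section
/- In EDPAL, amnesia holds: the formula ¬P_a^{d(φ)} → [φ] ¬K_a ψ is valid for all formulas φ and ψ, i.e., for every model M and state s, if d(a,s) < d(φ) and (M,s) ⊨ φ, then (M|φ, s) ⊭ K_a ψ. -/
/-- Formulas of EDPAL: DBEL plus public announcements (exact-depth atoms
range over `ℤ` since announcements can drive depths negative). -/
inductive Form (A P : Type) : Type
  | atom : P → Form A P
  | eqd  : A → ℤ → Form A P
  | ged  : A → ℤ → Form A P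
  | neg  : Form A P → Form A P
  | and  : Form A P → Form A P → Form A P
  | imp  : Form A P → Form A P → Form A P
  | kinf : A → Form A P → Form A P
  | k    : A → Form A P → Form A P
  | ann  : Form A P → Form A P → Form A P

namespace Form
/-- Modal depth of a formula; `d([φ]ψ) = d(φ) + d(ψ)`. -/
def md {A P : Type} : Form A P → ℕ
  | atom _ => 0
  | eqd _ _ => 0
  | ged _ _ => 0
  | neg φ => φ.md
  | and φ ψ => max φ.md ψ.md
  | imp φ ψ => max φ.md ψ.md
  | kinf _ φ => φ.md + 1
  | k _ φ => φ.md + 1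
  | ann φ ψ => φ.md + ψ.md

/-- Biconditional, as an abbreviation. -/
def iff {A P : Type} (φ ψ : Form A P) : Form A P := (φ.imp ψ).and (ψ.imp φ)
end Form

/-- An EDPAL model: states, equivalence relations, valuation, and a depth
assignment taking values in `ℤ`. -/
structure Model (A P : Type) where
  S : Type
  r : A → S → S → Prop
  equiv : ∀ a, Equivalence (r a)
  V : S → P → Prop
  d : A → S → ℤ

/-- The EDPAL model update `M|φ`, presented on the same carrier: the relation
is restricted to states satisfying the announcement (`X` is the set of states
satisfying `φ`; the diagonal is kept so the relation stays an equivalence, and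
states outside `X` become irrelevant isolated points), and every agent's depth
is decremented by the modal depth `k` of the announcement. -/
def upd {A P : Type} (M : Model A P) (X : M.S → Prop) (k : ℕ) : Model A P where
  S := M.S
  r a s t := (M.r a s t ∧ X s ∧ X t) ∨ s = t
  equiv a := by
    constructor
    · intro x; exact Or.inr rfl
    · rintro x y (⟨h, hx, hy⟩ | rfl)
      · exact Or.inl ⟨(M.equiv a).symm h, hy, hx⟩
      · exact Or.inr rfl
    · rintro x y z (⟨h, hx, hy⟩ | rfl) (⟨h', hy', hz⟩ | rfl)
      · exact Or.inl ⟨(M.equiv a).trans h h', hx, hz⟩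
      · exact Or.inl ⟨h, hx, hy⟩
      · exact Or.inl ⟨h', hy', hz⟩
      · exact Or.inr rfl
  V := M.V
  d a s := M.d a s - k

/-- EDPAL satisfaction. -/
def sat {A P : Type} : Form A P → (M : Model A P) → M.S → Prop
  | .atom p, M, s => M.V s p
  | .eqd a n, M, s => M.d a s = n
  | .ged a n, M, s => M.d a s ≥ n
  | .neg φ, M, s => ¬ sat φ M s
  | .and φ ψ, M, s => sat φ M s ∧ sat ψ M s
  | .imp φ ψ, M, s => sat φ M s → sat ψ M s
  | .kinf a φ, M, s => ∀ t, M.r a s t → sat φ M t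
  | .k a φ, M, s => M.d a s ≥ (φ.md : ℤ) ∧ ∀ t, M.r a s t → sat φ M t
  | .ann φ ψ, M, s => sat φ M s → sat ψ (upd M (fun t => sat φ M t) φ.md) s

/-- Amnesia in EDPAL: `¬P_a^{d(φ)} → [φ] ¬K_a ψ` is valid for all `φ, ψ`. -/
theorem edpal_amnesia {A P : Type} (a : A) (φ ψ : Form A P)
    (M : Model A P) (s : M.S) :
    sat (Form.imp (.neg (.ged a (φ.md : ℤ))) (.ann φ (.neg (.k a ψ)))) M s := by
  intro hneg hφ ⟨hd, _⟩
  simp only [sat] at hneg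
  have : M.d a s - (φ.md : ℤ) < 0 := by omega
  simp only [upd] at hd
  omega
end

section
/- In EDPAL, depth adjustment is valid: for every integer n, [φ] E_a^n ↔ (φ → E_a^{d(φ)+n}) holds at every pointed model. -/
/-- Depth adjustment in EDPAL: for every `n : ℤ`,
`[φ] E_a^n ↔ (φ → E_a^{d(φ)+n})` is valid. -/
theorem edpal_depth_adjustment {A P : Type} (a : A) (n : ℤ) (φ : Form A P)
    (M : Model A P) (s : M.S) :
    sat (Form.iff (.ann φ (.eqd a n)) (.imp φ (.eqd a ((φ.md : ℤ) + n)))) M s := by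
  constructor <;> intro h hφ <;> have := h hφ <;> simp only [sat, upd] at * <;> omega
end

section
/- In EDPAL, announcement composition is valid: [φ][ψ]χ ↔ [φ ∧ [φ]ψ] χ holds at every pointed model. -/
lemma model_mk_eq {A P S : Type} (r₁ r₂ : A → S → S → Prop) (e₁ : ∀ a, Equivalence (r₁ a))
    (e₂ : ∀ a, Equivalence (r₂ a)) (V : S → P → Prop) (d₁ d₂ : A → S → ℤ)
    (hr : r₁ = r₂) (hd : d₁ = d₂) :
    (⟨S, r₁, e₁, V, d₁⟩ : Model A P) = ⟨S, r₂, e₂, V, d₂⟩ := by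
  subst hr hd; rfl

lemma sat_eq_of_eq {A P S : Type} (r₁ r₂ : A → S → S → Prop) (e₁ : ∀ a, Equivalence (r₁ a))
    (e₂ : ∀ a, Equivalence (r₂ a)) (V : S → P → Prop) (d₁ d₂ : A → S → ℤ)
    (hr : r₁ = r₂) (hd : d₁ = d₂) (χ : Form A P) (s : S) :
    sat χ (⟨S, r₁, e₁, V, d₁⟩ : Model A P) s ↔ sat χ (⟨S, r₂, e₂, V, d₂⟩ : Model A P) s := by
  subst hr hd; rfl

lemma upd_upd {A P : Type} (M : Model A P) (X : M.S → Prop) (k l : ℕ)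
    (Y : (upd M X k).S → Prop) (Z : M.S → Prop) (hZ : ∀ t, Z t ↔ X t ∧ Y t)
    (χ : Form A P) (s : M.S) :
    sat χ (upd (upd M X k) Y l) s ↔ sat χ (upd M Z (k + l)) s := by
  apply sat_eq_of_eq
  · funext a s t
    show (((M.r a s t ∧ X s ∧ X t) ∨ s = t) ∧ Y s ∧ Y t ∨ s = t) =
      ((M.r a s t ∧ Z s ∧ Z t) ∨ s = t)
    apply propext
    constructor
    · rintro (⟨(⟨h, hx, hx'⟩ | rfl), hy, hy'⟩ | rfl)
      · exact Or.inl ⟨h, (hZ s).mpr ⟨hx, hy⟩, (hZ t).mpr ⟨hx', hy'⟩⟩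
      · exact Or.inr rfl
      · exact Or.inr rfl
    · rintro (⟨h, hz, hz'⟩ | rfl)
      · obtain ⟨hx, hy⟩ := (hZ s).mp hz
        obtain ⟨hx', hy'⟩ := (hZ t).mp hz'
        exact Or.inl ⟨Or.inl ⟨h, hx, hx'⟩, hy, hy'⟩
      · exact Or.inr rfl
  · funext a s
    show M.d a s - k - l = M.d a s - (k + l : ℕ)
    push_cast; ring

/-- Announcement composition in EDPAL: `[φ][ψ]χ ↔ [φ ∧ [φ]ψ]χ` is valid. -/
theorem edpal_announcement_composition {A P : Type} (φ ψ χ : Form A P)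
    (M : Model A P) (s : M.S) :
    sat (Form.iff (.ann φ (.ann ψ χ)) (.ann (.and φ (.ann φ ψ)) χ)) M s := by
  set X : M.S → Prop := fun t => sat φ M t with hX
  set M1 := upd M X φ.md with hM1
  set Y : M1.S → Prop := fun t => sat ψ M1 t with hY
  have hmd : (Form.and φ (Form.ann φ ψ)).md = φ.md + ψ.md := by
    simp [Form.md]
  have key : ∀ t : M.S, sat χ (upd M1 Y ψ.md) t ↔
      sat χ (upd M (fun u => sat (Form.and φ (Form.ann φ ψ)) M u) (Form.and φ (Form.ann φ ψ)).md) t := by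
    intro t
    rw [hmd]
    apply upd_upd
    intro u
    show sat φ M u ∧ (sat φ M u → sat ψ M1 u) ↔ X u ∧ Y u
    constructor
    · rintro ⟨h1, h2⟩; exact ⟨h1, h2 h1⟩
    · rintro ⟨h1, h2⟩; exact ⟨h1, fun _ => h2⟩
  constructor
  · intro h hZ
    obtain ⟨h1, h2⟩ := hZ
    exact (key s).mp (h h1 (h2 h1))
  · intro h h1 h2
    exact (key s).mpr (h ⟨h1, fun _ => h2⟩)
end

section
/- In EDPAL, knowledge announcement is valid: [φ](P_a^{d(ψ)} → K_a ψ) ↔ (φ → (P_a^{d(φ)+d(ψ)} → K_a [φ]ψ)) holds at every pointed model. -/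
/-- Knowledge announcement in EDPAL:
`[φ](P_a^{d(ψ)} → K_a ψ) ↔ (φ → (P_a^{d(φ)+d(ψ)} → K_a [φ]ψ))` is valid. -/
theorem edpal_knowledge_announcement {A P : Type} (a : A) (φ ψ : Form A P)
    (M : Model A P) (s : M.S) :
    sat (Form.iff (.ann φ (.imp (.ged a (ψ.md : ℤ)) (.k a ψ)))
      (.imp φ (.imp (.ged a ((φ.md : ℤ) + (ψ.md : ℤ))) (.k a (.ann φ ψ))))) M s := by
  simp only [Form.iff, sat, Form.md, upd, ge_iff_le, Nat.cast_add]
  constructor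
  · intro h hφ hd
    refine ⟨by omega, ?_⟩
    intro t hrt hφt
    have := h hφ (by omega)
    exact this.2 t (Or.inl ⟨hrt, hφ, hφt⟩)
  · intro h hφ hd
    refine ⟨hd, ?_⟩
    rintro t (⟨hrt, _, hφt⟩ | rfl)
    · exact (h hφ (by omega)).2 t hrt hφt
    · exact (h hφ (by omega)).2 s ((M.equiv a).refl s) hφ
end

section
/- Muddy children lower bound for two children in EDPAL: in the muddy children model with states {(1,1),(1,0),(0,1)} and true state (1,1), with any depth function d, if (M,(1,1)) ⊨ ⟨¬K_1 m_1⟩ K_0 m_0 then d(0,(1,1)) ≥ 1. That is, child 0 must have depth at least 1 to deduce it is muddy from child 1's announcement. -/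
/-- States of the two-child muddy children model: pairs of Booleans (`true` =
muddy) excluding the all-clean state. -/
abbrev MState : Type := {v : Bool × Bool // v.1 = true ∨ v.2 = true}

/-- The two-child muddy children model (EDPAL, so depths in `ℤ`) with an
arbitrary depth function: atom `i : Fin 2` is `m_i`; child `i` cannot
distinguish states differing only in component `i`. -/
def muddyModel (dep : Fin 2 → MState → ℤ) : Model (Fin 2) (Fin 2) where
  S := MState
  r i s t := (i = 0 → s.val.2 = t.val.2) ∧ (i = 1 → s.val.1 = t.val.1)
  equiv _ :=
    ⟨fun _ => ⟨fun _ => rfl, fun _ => rfl⟩,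
     fun h => ⟨fun hi => (h.1 hi).symm, fun hi => (h.2 hi).symm⟩,
     fun h h' => ⟨fun hi => (h.1 hi).trans (h'.1 hi),
       fun hi => (h.2 hi).trans (h'.2 hi)⟩⟩
  V s i := (if i = 0 then s.val.1 else s.val.2) = true
  d := dep

/-- The true state where both children are muddy. -/
def s11 : MState := ⟨(true, true), Or.inl rfl⟩

/-- Muddy children lower bound for two children in EDPAL: if
`⟨¬K_1 m_1⟩ K_0 m_0` holds at the state where both children are muddy (with
`⟨φ⟩ψ = ¬[φ]¬ψ`), then child 0 has depth at least `1` there. -/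
theorem muddy_lower_bound_two (dep : Fin 2 → MState → ℤ)
    (h : sat (.neg (.ann (.neg (.k 1 (.atom 1))) (.neg (.k 0 (.atom 0)))))
      (muddyModel dep) s11) :
    dep 0 s11 ≥ 1 := by
  simp only [sat, upd, Form.md, muddyModel] at h
  push_neg at h
  obtain ⟨-, hd, -⟩ := h
  omega
end
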